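/- arXiv:2507.06947 — 2 statements merged into one kernel-verified Lean document; each statement's English description precedes it below -/
import Mathlib

section
/- Let d ≥ 1, let K be a convex body in ℝ^d that is centrally symmetric (K = −K), let F be a linear subspace of ℝ^d of dimension s with 0 ≤ s ≤ d−1, and let A : ℝ^d → ℝ^d be a self-adjoint positive definite F-operator with A x = μ x for all x ∈ Fᗮ (μ > 0). Set E = A(B^d) and assume E ⊆ K and that E has maximal volume among ellipsoids of revolution with axis F contained in K (for every F-operator B and every z ∈ ℝ^d with B(B^d) + z ⊆ K one has vol(B(B^d) + z) ≤ vol(E)). Then for every c ∈ Fᗮ and every r > 0 such that the set {x ∈ Fᗮ : ‖x − c‖ ≤ r} is contained in K, one has r ≤ √(d/(d−s))·μ. -/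
open MeasureTheory RealInnerProductSpace Metric Set Pointwise

noncomputable section

/-- An `F`-operator: an invertible linear map leaving `F` and `Fᗮ` invariant and acting
as a nonzero multiple of the identity on `Fᗮ`. -/
def IsFOperator {d : ℕ} (F : Submodule ℝ (EuclideanSpace ℝ (Fin d)))
    (A : EuclideanSpace ℝ (Fin d) ≃ₗ[ℝ] EuclideanSpace ℝ (Fin d)) : Prop :=
  (∀ x ∈ F, A x ∈ F) ∧ (∀ x ∈ Fᗮ, A x ∈ Fᗮ) ∧
    ∃ μ : ℝ, μ ≠ 0 ∧ ∀ x ∈ Fᗮ, A x = μ • x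

/-- The orthogonal projection onto `F`, as a map of the ambient space. -/
def projF {d : ℕ} (F : Submodule ℝ (EuclideanSpace ℝ (Fin d)))
    (x : EuclideanSpace ℝ (Fin d)) : EuclideanSpace ℝ (Fin d) :=
  (F.orthogonalProjectionOnto x : EuclideanSpace ℝ (Fin d))

/-- A contact pair of convex bodies `K ⊆ L`. -/
def IsContactPair {d : ℕ} (K L : Set (EuclideanSpace ℝ (Fin d)))
    (v p : EuclideanSpace ℝ (Fin d)) : Prop :=
  v ∈ frontier K ∧ v ∈ frontier L ∧ ⟪p, v⟫ = 1 ∧ ∀ x ∈ L, ⟪p, x⟫ ≤ 1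

set_option maxHeartbeats 4000000

lemma bernoulli_contra {s d : ℕ} (hsd : s < d) {c : ℝ} (hc : 0 < c)
    (h : ∀ t : ℝ, 0 < t → t < 1 → (1 - t) ^ s * (1 + c * t) ^ (d - s) ≤ 1) :
    c * ((d : ℝ) - s) ≤ s := by
  by_contra hlt
  push_neg at hlt
  have hds : 0 < (d : ℝ) - s := by
    have : (s:ℝ) < d := by exact_mod_cast hsd
    linarith
  set ε : ℝ := c * ((d:ℝ) - s) - s with hε
  have hε0 : 0 < ε := by linarith
  set N : ℝ := s * ((d:ℝ) - s) * c with hN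
  have hN0 : 0 ≤ N := by positivity
  set t : ℝ := min (1/2) (ε / (2 * N + 1)) with ht
  have ht0 : 0 < t := by
    apply lt_min (by norm_num)
    positivity
  have ht1 : t < 1 := lt_of_le_of_lt (min_le_left _ _) (by norm_num)
  have htle : t ≤ ε / (2 * N + 1) := min_le_right _ _
  have hNt : N * t ≤ ε / 2 := by
    have h1 : N * t ≤ N * (ε / (2 * N + 1)) := by
      apply mul_le_mul_of_nonneg_left htle hN0
    have h2 : N * (ε / (2 * N + 1)) ≤ ε / 2 := by
      rw [← mul_div_assoc, div_le_div_iff₀ (by positivity) (by norm_num : (0:ℝ) < 2)]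
      nlinarith
    linarith
  have hst : (s : ℝ) * t ≤ 1/2 := by
    have hsε : (s:ℝ) * ε ≤ N := by
      rw [hN, hε]
      nlinarith [mul_nonneg (Nat.cast_nonneg s : (0:ℝ) ≤ s) hc.le]
    have : (s:ℝ) * t ≤ s * (ε / (2*N+1)) := by
      apply mul_le_mul_of_nonneg_left htle (Nat.cast_nonneg s)
    have h2 : (s:ℝ) * (ε / (2*N+1)) ≤ 1/2 := by
      rw [← mul_div_assoc, div_le_div_iff₀ (by positivity) (by norm_num : (0:ℝ) < 2)]
      nlinarith
    linarith
  have hb1 : 1 - (s:ℝ) * t ≤ (1 - t) ^ s := by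
    have := one_add_mul_le_pow (a := -t) (by linarith) s
    calc 1 - (s:ℝ)*t = 1 + s * (-t) := by ring
    _ ≤ (1 + -t)^s := this
    _ = (1-t)^s := by ring_nf
  have hb2 : 1 + ((d:ℝ) - s) * (c * t) ≤ (1 + c * t) ^ (d - s) := by
    have := one_add_mul_le_pow (a := c*t) (by nlinarith) (d - s)
    have hcast : ((d - s : ℕ) : ℝ) = (d:ℝ) - s := by
      rw [Nat.cast_sub hsd.le]
    calc 1 + ((d:ℝ)-s) * (c*t) = 1 + ((d-s : ℕ):ℝ) * (c*t) := by rw [hcast]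
    _ ≤ (1 + c*t)^(d-s) := this
  have hkey : (1 - (s:ℝ)*t) * (1 + ((d:ℝ)-s)*(c*t)) ≤ (1-t)^s * (1+c*t)^(d-s) := by
    apply mul_le_mul hb1 hb2 (by nlinarith) (pow_nonneg (by linarith) s)
  have hexp : (1 - (s:ℝ)*t) * (1 + ((d:ℝ)-s)*(c*t)) = 1 + ε * t - N * t^2 := by
    rw [hε, hN]; ring
  have hgt : (1:ℝ) < 1 + ε * t - N * t^2 := by
    have : N * t^2 ≤ (ε/2) * t := by
      calc N * t^2 = (N*t)*t := by ring
      _ ≤ (ε/2)*t := mul_le_mul_of_nonneg_right hNt ht0.le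
    nlinarith
  have := h t ht0 ht1
  linarith [hexp ▸ hkey]

lemma hull_root {R τ b p q : ℝ} (hR : 1 < R) (hτ : 0 < τ) (hτ1 : τ < 1)
    (hb : 1 ≤ b) (hbR : b < R)
    (hpq : p^2 + q^2 ≤ 1) (hp : 0 ≤ p) (hq : 0 ≤ q)
    (hRel : b^2 + (R^2-1)*τ^2 = R^2)
    (hcase : 1 < τ^2*p^2 + b^2*q^2) :
    ∃ m : ℝ, 0 < m ∧ m < 1 ∧ τ^2*p^2 + (b*q - m*R)^2 = (1-m)^2 := by
  have hR0 : 0 < R := by linarith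
  set γ : ℝ := Real.sqrt (R^2 - 1) with hγdef
  have hγ0 : 0 ≤ γ := Real.sqrt_nonneg _
  have hγsq : γ^2 = R^2 - 1 := Real.sq_sqrt (by nlinarith)
  have hq1 : q ≤ 1 := by nlinarith
  have hbq : b*q < R := by nlinarith
  have hCS : τ*p*γ + b*q ≤ R := by
    have h1 : (τ*p*γ + b*q)^2 ≤ (τ^2*γ^2 + b^2)*(p^2+q^2) := by
      nlinarith [sq_nonneg (τ*γ*q - b*p)]
    have h2 : (τ^2*γ^2 + b^2) = R^2 := by rw [hγsq]; linarith
    nlinarith [mul_nonneg (mul_nonneg hτ.le hp) hγ0, mul_nonneg (by linarith : (0:ℝ) ≤ b) hq]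
  set D2 : ℝ := (b*q - R)^2 - (R^2-1)*τ^2*p^2 with hD2def
  have hD2 : 0 ≤ D2 := by
    have h3 : (γ*(τ*p))^2 ≤ (R-b*q)^2 := by
      nlinarith [mul_nonneg hγ0 (mul_nonneg hτ.le hp)]
    have h4 : (γ*(τ*p))^2 = (R^2-1)*τ^2*p^2 := by
      have : (γ*(τ*p))^2 = γ^2*(τ^2*p^2) := by ring
      rw [this, hγsq]; ring
    rw [hD2def]; nlinarith [h3, h4]
  have hqR : 1 < q*R := by
    have e1 : τ^2*p^2 + τ^2*q^2 ≤ τ^2 := by nlinarith [sq_nonneg τ]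
    have e2 : b^2*q^2 + (R^2-1)*τ^2*q^2 = R^2*q^2 := by linear_combination q^2 * hRel
    have h5 : 1 * (1 - τ^2) < q^2*R^2*(1-τ^2) := by nlinarith [hcase, e1, e2]
    have h6 : 0 < 1 - τ^2 := by nlinarith
    have h7 : 1 < q^2*R^2 := lt_of_mul_lt_mul_right (by linarith) h6.le
    nlinarith [mul_nonneg hq hR0.le]
  set S : ℝ := Real.sqrt D2 with hSdef
  have hS0 : 0 ≤ S := Real.sqrt_nonneg _
  have hSsq : S^2 = D2 := Real.sq_sqrt hD2
  have hident : D2 = (b*q*R - 1)^2 - (R^2-1)*(τ^2*p^2 + b^2*q^2 - 1) := by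
    rw [hD2def]; ring
  have hden : 0 < R^2 - 1 := by nlinarith
  set m : ℝ := (b*q*R - 1 + S)/(R^2-1) with hm
  have hmden : m * (R^2-1) = b*q*R - 1 + S := by
    rw [hm]; field_simp
  have hbqR : 1 < b*q*R := by
    have : q*R ≤ b*(q*R) := le_mul_of_one_le_left (by positivity) hb
    nlinarith
  have key2 : (R^2-1)*((R^2-1)*m^2 - 2*(b*q*R-1)*m + (τ^2*p^2 + b^2*q^2 - 1)) = 0 := by
    linear_combination ((R^2-1)*m - (b*q*R-1-S)) * hmden + hSsq + hident
  have key : (R^2-1)*m^2 - 2*(b*q*R-1)*m + (τ^2*p^2 + b^2*q^2 - 1) = 0 :=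
    (mul_eq_zero.mp key2).resolve_left (by linarith)
  refine ⟨m, ?_, ?_, ?_⟩
  · apply div_pos (by linarith) hden
  · rw [hm, div_lt_one hden]
    have hS2 : S^2 < (R*(R - b*q))^2 := by
      rw [hSsq, hD2def]
      have h8 : 0 < (R^2-1)*(R - b*q)^2 := mul_pos hden (pow_pos (by linarith) 2)
      have h9 : 0 ≤ (R^2-1)*τ^2*p^2 := by positivity
      nlinarith [h8, h9]
    have : S < R*(R-b*q) := by
      nlinarith [mul_pos hR0 (by linarith : (0:ℝ) < R - b*q)]
    nlinarith
  · linear_combination key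

lemma det_prodMap' {M₁ M₂ : Type*} [AddCommGroup M₁] [AddCommGroup M₂] [Module ℝ M₁] [Module ℝ M₂]
    [FiniteDimensional ℝ M₁] [FiniteDimensional ℝ M₂] (f : M₁ →ₗ[ℝ] M₁) (g : M₂ →ₗ[ℝ] M₂) :
    LinearMap.det (f.prodMap g) = f.det * g.det := by
  classical
  let b₁ := Module.finBasis ℝ M₁
  let b₂ := Module.finBasis ℝ M₂
  rw [← LinearMap.det_toMatrix (b₁.prod b₂), LinearMap.toMatrix_prodMap b₁ b₂ f g,
    Matrix.det_fromBlocks_zero₂₁, LinearMap.det_toMatrix, LinearMap.det_toMatrix]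

def Dmap {d : ℕ} (F : Submodule ℝ (EuclideanSpace ℝ (Fin d))) (τ b : ℝ) (hτ : τ ≠ 0) (hb : b ≠ 0) :
    EuclideanSpace ℝ (Fin d) ≃ₗ[ℝ] EuclideanSpace ℝ (Fin d) :=
  (Submodule.prodEquivOfIsCompl F Fᗮ F.isCompl_orthogonal_of_hasOrthogonalProjection).symm.trans
    (((LinearEquiv.smulOfNeZero ℝ F τ hτ).prodCongr
      (LinearEquiv.smulOfNeZero ℝ (Fᗮ) b hb)).trans
      (Submodule.prodEquivOfIsCompl F Fᗮ F.isCompl_orthogonal_of_hasOrthogonalProjection))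

lemma Dmap_apply {d : ℕ} (F : Submodule ℝ (EuclideanSpace ℝ (Fin d))) (τ b : ℝ)
    (hτ : τ ≠ 0) (hb : b ≠ 0) (f g : EuclideanSpace ℝ (Fin d))
    (hf : f ∈ F) (hg : g ∈ Fᗮ) :
    Dmap F τ b hτ hb (f + g) = τ • f + b • g := by
  set e := Submodule.prodEquivOfIsCompl F Fᗮ F.isCompl_orthogonal_of_hasOrthogonalProjection with he
  have hsymm : e.symm (f + g) = (⟨f, hf⟩, ⟨g, hg⟩) := by
    rw [LinearEquiv.symm_apply_eq]
    simp [he, Submodule.coe_prodEquivOfIsCompl']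
  simp only [Dmap, LinearEquiv.trans_apply, ← he, hsymm]
  simp [Submodule.coe_prodEquivOfIsCompl', LinearEquiv.smulOfNeZero, LinearEquiv.prodCongr]
  rfl

lemma Dmap_det {d : ℕ} (F : Submodule ℝ (EuclideanSpace ℝ (Fin d))) (τ b : ℝ)
    (hτ : τ ≠ 0) (hb : b ≠ 0) :
    LinearMap.det (Dmap F τ b hτ hb).toLinearMap
      = τ ^ (Module.finrank ℝ F) * b ^ (Module.finrank ℝ (Fᗮ : Submodule ℝ (EuclideanSpace ℝ (Fin d)))) := by
  set e := Submodule.prodEquivOfIsCompl F Fᗮ F.isCompl_orthogonal_of_hasOrthogonalProjection with he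
  set P := ((LinearEquiv.smulOfNeZero ℝ F τ hτ).prodCongr (LinearEquiv.smulOfNeZero ℝ (Fᗮ) b hb))
  have h1 : (Dmap F τ b hτ hb).toLinearMap
      = (e : _ →ₗ[ℝ] _) ∘ₗ (P.toLinearMap) ∘ₗ (e.symm : _ →ₗ[ℝ] _) := rfl
  rw [h1, LinearMap.det_conj]
  have h2 : P.toLinearMap = LinearMap.prodMap
      (LinearEquiv.smulOfNeZero ℝ F τ hτ).toLinearMap
      (LinearEquiv.smulOfNeZero ℝ (Fᗮ) b hb).toLinearMap := rfl
  rw [h2, det_prodMap']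
  have h3 : (LinearEquiv.smulOfNeZero ℝ F τ hτ).toLinearMap = τ • (LinearMap.id : F →ₗ[ℝ] F) := by
    ext x; rfl
  have h4 : (LinearEquiv.smulOfNeZero ℝ (Fᗮ) b hb).toLinearMap
      = b • (LinearMap.id : Fᗮ →ₗ[ℝ] Fᗮ) := by
    ext x; rfl
  rw [h3, h4, LinearMap.det_smul, LinearMap.det_smul, LinearMap.det_id]
  simp

/-- **Inradius bound in `Fᗮ`, centrally symmetric case.**
If `K = -K` is a centrally symmetric convex body and `E = A(B^d)` is a maximal-volume
ellipsoid of revolution with axis `F` (`dim F = s < d`) contained in `K`, where `A` is a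
self-adjoint positive definite `F`-operator acting as `μ • id` on `Fᗮ`, then any ball of `Fᗮ`
of radius `r` contained in `K` satisfies `r ≤ √(d/(d-s)) * μ`. -/
theorem stmt5 {d : ℕ} (hd : 1 ≤ d)
    (K : Set (EuclideanSpace ℝ (Fin d)))
    (hKcpt : IsCompact K) (hKconv : Convex ℝ K) (hKint : (interior K).Nonempty)
    (hKsym : K = -K)
    (F : Submodule ℝ (EuclideanSpace ℝ (Fin d))) (s : ℕ)
    (hs : Module.finrank ℝ F = s) (hsd : s < d)
    (A : EuclideanSpace ℝ (Fin d) ≃ₗ[ℝ] EuclideanSpace ℝ (Fin d))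
    (hA : IsFOperator F A)
    (hAsa : ∀ x y : EuclideanSpace ℝ (Fin d), ⟪A x, y⟫ = ⟪x, A y⟫)
    (hApd : ∀ x : EuclideanSpace ℝ (Fin d), x ≠ 0 → 0 < ⟪A x, x⟫)
    (μ : ℝ) (hμ : 0 < μ) (hAμ : ∀ x ∈ Fᗮ, A x = μ • x)
    (E : Set (EuclideanSpace ℝ (Fin d)))
    (hE : E = A '' closedBall (0 : EuclideanSpace ℝ (Fin d)) 1)
    (hEK : E ⊆ K)
    (hmax : ∀ (B : EuclideanSpace ℝ (Fin d) ≃ₗ[ℝ] EuclideanSpace ℝ (Fin d)),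
      IsFOperator F B → ∀ z : EuclideanSpace ℝ (Fin d),
        (fun y => B y + z) '' closedBall (0 : EuclideanSpace ℝ (Fin d)) 1 ⊆ K →
        volume ((fun y => B y + z) '' closedBall (0 : EuclideanSpace ℝ (Fin d)) 1) ≤ volume E) :
    ∀ c ∈ Fᗮ, ∀ r : ℝ, 0 < r →
      {x : EuclideanSpace ℝ (Fin d) | x ∈ Fᗮ ∧ ‖x - c‖ ≤ r} ⊆ K →
      r ≤ Real.sqrt ((d : ℝ) / ((d : ℝ) - (s : ℝ))) * μ := by
  
  intro c hcF r hr hball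
  by_contra hcon
  push_neg at hcon
  have hdim : Module.finrank ℝ (EuclideanSpace ℝ (Fin d)) = d := finrank_euclideanSpace_fin
  have hdimpF : Module.finrank ℝ (Fᗮ : Submodule ℝ (EuclideanSpace ℝ (Fin d))) = d - s := by
    have h := Submodule.finrank_add_finrank_orthogonal (K := F)
    rw [hs, hdim] at h
    omega
  have hds : 0 < (d:ℝ) - s := by
    have : (s:ℝ) < d := by exact_mod_cast hsd
    linarith
  set R : ℝ := r / μ with hRdef
  have hrR : r = R * μ := by rw [hRdef, div_mul_cancel₀ _ hμ.ne']
  have hfrac1 : 1 ≤ (d:ℝ)/((d:ℝ)-s) := by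
    rw [le_div_iff₀ hds]
    have : (0:ℝ) ≤ s := Nat.cast_nonneg s
    linarith
  have hsqrt1 : 1 ≤ Real.sqrt ((d:ℝ)/((d:ℝ)-s)) := by
    rw [show (1:ℝ) = Real.sqrt 1 from (Real.sqrt_one).symm]
    exact Real.sqrt_le_sqrt hfrac1
  have hsqrtR : Real.sqrt ((d:ℝ)/((d:ℝ)-s)) < R := by
    rw [hRdef, lt_div_iff₀ hμ]
    exact hcon
  have hR1 : 1 < R := lt_of_le_of_lt hsqrt1 hsqrtR
  have hRsq : (d:ℝ)/((d:ℝ)-s) < R^2 := by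
    have h0 : 0 ≤ (d:ℝ)/((d:ℝ)-s) := by positivity
    calc (d:ℝ)/((d:ℝ)-s) = Real.sqrt ((d:ℝ)/((d:ℝ)-s))^2 := (Real.sq_sqrt h0).symm
    _ < R^2 := by
        apply pow_lt_pow_left₀ hsqrtR (Real.sqrt_nonneg _)
        norm_num
  have hcbig : (s:ℝ) < (R^2-1) * ((d:ℝ)-(s:ℝ)) := by
    rw [div_lt_iff₀ hds] at hRsq
    nlinarith
  -- the centered ball in Fᗮ is contained in K
  have ballK : ∀ g, g ∈ Fᗮ → ‖g‖ ≤ r → g ∈ K := by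
    intro g hgF hgr
    have h1 : g + c ∈ K := by
      apply hball
      constructor
      · exact Fᗮ.add_mem hgF hcF
      · simpa using hgr
    have h2 : g - c ∈ K := by
      rw [hKsym, Set.mem_neg]
      apply hball
      constructor
      · rw [neg_sub]
        exact Fᗮ.sub_mem hcF hgF
      · rw [neg_sub]
        simpa [sub_sub_cancel_left] using (by simpa [norm_neg] using hgr : ‖-g‖ ≤ r)
    have h3 := hKconv h1 h2 (by norm_num : (0:ℝ) ≤ 1/2) (by norm_num : (0:ℝ) ≤ 1/2)
      (by norm_num : (1:ℝ)/2 + 1/2 = 1)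
    have h4 : (1/2 : ℝ) • (g + c) + (1/2 : ℝ) • (g - c) = g := by module
    rwa [h4] at h3
  -- the key per-t volume inequality
  have ht_bound : ∀ t : ℝ, 0 < t → t < 1 → (1 - t)^s * (1 + (R^2-1) * t)^(d-s) ≤ 1 := by
    intro t ht0 ht1
    set c0 : ℝ := R^2 - 1 with hc0def
    have hc00 : 0 < c0 := by rw [hc0def]; nlinarith
    set τ : ℝ := Real.sqrt (1 - t) with hτdef
    have hτ0 : 0 < τ := Real.sqrt_pos.mpr (by linarith)
    have hτsq : τ^2 = 1 - t := Real.sq_sqrt (by linarith)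
    have hτ1 : τ < 1 := by nlinarith [hτ0]
    set b : ℝ := Real.sqrt (1 + c0*t) with hbdef
    have hb0 : 0 < b := Real.sqrt_pos.mpr (by nlinarith)
    have hbsq : b^2 = 1 + c0*t := Real.sq_sqrt (by nlinarith)
    have hb1 : 1 ≤ b := by nlinarith
    have hbR : b < R := by nlinarith [hR1]
    have hRel : b^2 + (R^2-1)*τ^2 = R^2 := by
      rw [hbsq, hτsq, hc0def]; ring
    set D := Dmap F τ b hτ0.ne' hb0.ne' with hD
    set Bt := D.trans A with hBt
    have hBtapp : ∀ x, Bt x = A (D x) := fun x => rfl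
    -- decomposition facts
    have hdecomp : ∀ u : EuclideanSpace ℝ (Fin d),
        ∃ f g, f ∈ F ∧ g ∈ Fᗮ ∧ u = f + g := by
      intro u
      exact ⟨F.orthogonalProjectionOnto u, u - F.orthogonalProjectionOnto u,
        SetLike.coe_mem _, F.sub_starProjection_mem_orthogonal u, by abel⟩
    -- Bt is an F-operator
    have hBtop : IsFOperator F Bt := by
      refine ⟨?_, ?_, ⟨μ * b, by positivity, ?_⟩⟩
      · intro x hx
        have : D x = τ • x := by
          have := Dmap_apply F τ b hτ0.ne' hb0.ne' x 0 hx (Submodule.zero_mem _)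
          simpa using this
        rw [hBtapp, this, _root_.map_smul]
        exact Submodule.smul_mem _ _ (hA.1 x hx)
      · intro x hx
        have : D x = b • x := by
          have := Dmap_apply F τ b hτ0.ne' hb0.ne' 0 x (Submodule.zero_mem _) hx
          simpa using this
        rw [hBtapp, this, _root_.map_smul]
        exact Submodule.smul_mem _ _ (hA.2.1 x hx)
      · intro x hx
        have h1 : D x = b • x := by
          have := Dmap_apply F τ b hτ0.ne' hb0.ne' 0 x (Submodule.zero_mem _) hx
          simpa using this
        rw [hBtapp, h1, _root_.map_smul, hAμ x hx, smul_smul, mul_comm]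
    -- containment of the new ellipsoid in K
    have hsub : (fun y => Bt y + 0) '' closedBall (0 : EuclideanSpace ℝ (Fin d)) 1 ⊆ K := by
      intro z hz
      simp only [add_zero, Set.mem_image] at hz
      obtain ⟨u, hu, rfl⟩ := hz
      rw [mem_closedBall_zero_iff] at hu
      obtain ⟨f, g, hf, hg, hufg⟩ := hdecomp u
      set p : ℝ := ‖f‖ with hpd
      set q : ℝ := ‖g‖ with hqd
      have horth : ⟪f, g⟫ = 0 := Submodule.inner_right_of_mem_orthogonal hf hg
      have hpq : p^2 + q^2 ≤ 1 := by
        have hnu : ‖u‖^2 = p^2 + q^2 := by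
          rw [hufg, norm_add_sq_real, horth]; ring
        nlinarith [norm_nonneg u]
      have hDu : D u = τ • f + b • g := by
        rw [hufg]; exact Dmap_apply F τ b hτ0.ne' hb0.ne' f g hf hg
      by_cases hc1 : τ^2*p^2 + b^2*q^2 ≤ 1
      · -- the point is in E already
        have e1 : ‖τ • f‖^2 = τ^2*p^2 := by
          rw [norm_smul, Real.norm_eq_abs, mul_pow, sq_abs]
        have e2 : ‖b • g‖^2 = b^2*q^2 := by
          rw [norm_smul, Real.norm_eq_abs, mul_pow, sq_abs]
        have e3 : ⟪τ • f, b • g⟫ = 0 := by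
          rw [real_inner_smul_left, real_inner_smul_right, horth]; ring
        have hnv : ‖τ • f + b • g‖^2 = τ^2*p^2 + b^2*q^2 := by
          rw [norm_add_sq_real, e1, e2, e3]; ring
        have hnv1 : ‖τ • f + b • g‖ ≤ 1 := by
          nlinarith [norm_nonneg (τ • f + b • g)]
        apply hEK
        rw [hE]
        exact ⟨τ • f + b • g, mem_closedBall_zero_iff.mpr hnv1, by rw [hBtapp, hDu]⟩
      · push_neg at hc1
        have hq0 : 0 < q := by
          rcases lt_or_eq_of_le (norm_nonneg g) with h | h
          · exact h
          · exfalso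
            have hq00 : q = 0 := h.symm
            have hp1 : p^2 ≤ 1 := by nlinarith
            have hτ2 : τ^2 < 1 := by nlinarith
            have h5 : τ^2*p^2 ≤ τ^2 := by
              nlinarith [mul_nonneg (sq_nonneg τ) (by linarith : (0:ℝ) ≤ 1 - p^2)]
            rw [hq00] at hc1
            nlinarith
        obtain ⟨m, hm0, hm1, hmeq⟩ := hull_root hR1 hτ0 hτ1 hb1 hbR hpq
          (norm_nonneg f) (norm_nonneg g) hRel hc1
        set gh : EuclideanSpace ℝ (Fin d) := q⁻¹ • g with hghdef
        have hghF : gh ∈ Fᗮ := Submodule.smul_mem _ _ hg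
        have hghnorm : ‖gh‖ = 1 := by
          rw [hghdef, norm_smul, Real.norm_eq_abs, abs_of_pos (inv_pos.mpr hq0)]
          field_simp
          exact hqd.symm
        have hgq : g = q • gh := by
          rw [hghdef, smul_smul, mul_inv_cancel₀ hq0.ne', one_smul]
        have horth2 : ⟪f, gh⟫ = 0 := Submodule.inner_right_of_mem_orthogonal hf hghF
        set y : EuclideanSpace ℝ (Fin d) := τ • f + (b*q - m*R) • gh with hydef
        have hny : ‖y‖^2 = (1-m)^2 := by
          have e1 : ‖τ • f‖^2 = τ^2*p^2 := by
            rw [norm_smul, Real.norm_eq_abs, mul_pow, sq_abs]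
          have e2 : ‖(b*q - m*R) • gh‖^2 = (b*q - m*R)^2 := by
            rw [norm_smul, Real.norm_eq_abs, hghnorm, mul_one, sq_abs]
          have e3 : ⟪τ • f, (b*q - m*R) • gh⟫ = 0 := by
            rw [real_inner_smul_left, real_inner_smul_right, horth2]; ring
          rw [hydef, norm_add_sq_real, e1, e2, e3, ← hmeq]; ring
        have hnyv : ‖y‖ = 1 - m := by
          have h1 : ‖y‖ = Real.sqrt (‖y‖^2) := (Real.sqrt_sq (norm_nonneg y)).symm
          rw [h1, hny, Real.sqrt_sq (by linarith)]
        set w : EuclideanSpace ℝ (Fin d) := (1-m)⁻¹ • y with hwdef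
        have hwnorm : ‖w‖ ≤ 1 := by
          rw [hwdef, norm_smul, Real.norm_eq_abs, hnyv,
            abs_of_pos (inv_pos.mpr (by linarith : (0:ℝ) < 1 - m)),
            inv_mul_cancel₀ (by linarith : (1:ℝ) - m ≠ 0)]
        have hAwK : A w ∈ K := by
          apply hEK
          rw [hE]
          exact ⟨w, mem_closedBall_zero_iff.mpr hwnorm, rfl⟩
        have hvecK : (R*μ) • gh ∈ K := by
          apply ballK _ (Submodule.smul_mem _ _ hghF)
          rw [norm_smul, Real.norm_eq_abs, hghnorm, mul_one,
            abs_of_pos (mul_pos (by linarith : (0:ℝ) < R) hμ), hrR]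
        have hAgh : A gh = μ • gh := hAμ gh hghF
        have hcomb : Bt u = (1-m) • A w + m • ((R*μ) • gh) := by
          rw [hBtapp, hDu, hgq, hwdef, hydef]
          simp only [map_add, _root_.map_smul, hAgh, smul_add, smul_smul]
          have h1m : (1:ℝ) - m ≠ 0 := by linarith
          match_scalars
          · field_simp [h1m]
            try ring
          · field_simp [h1m]
            try ring
        rw [hcomb]
        exact hKconv hAwK hvecK (by linarith) hm0.le (by ring)
    -- volume comparison
    have hvol := hmax Bt hBtop 0 hsub
    have himg : (fun y => Bt y + (0:EuclideanSpace ℝ (Fin d))) '' closedBall 0 1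
        = Bt.toLinearMap '' closedBall (0:EuclideanSpace ℝ (Fin d)) 1 := by
      simp only [add_zero]
      rfl
    have hvol1 : volume (Bt.toLinearMap '' closedBall (0:EuclideanSpace ℝ (Fin d)) 1)
        = ENNReal.ofReal |LinearMap.det Bt.toLinearMap|
          * volume (closedBall (0:EuclideanSpace ℝ (Fin d)) 1) :=
      Measure.addHaar_image_linearMap volume Bt.toLinearMap _
    have hvol2 : volume E = ENNReal.ofReal |LinearMap.det A.toLinearMap|
        * volume (closedBall (0:EuclideanSpace ℝ (Fin d)) 1) := by
      rw [hE]
      have : (A : EuclideanSpace ℝ (Fin d) → EuclideanSpace ℝ (Fin d)) '' closedBall 0 1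
          = A.toLinearMap '' closedBall 0 1 := rfl
      rw [this]
      exact Measure.addHaar_image_linearMap volume A.toLinearMap _
    have hdet : LinearMap.det Bt.toLinearMap
        = LinearMap.det A.toLinearMap * LinearMap.det D.toLinearMap := by
      have : Bt.toLinearMap = A.toLinearMap ∘ₗ D.toLinearMap := rfl
      rw [this, LinearMap.det_comp]
    have hDdet : LinearMap.det D.toLinearMap = τ^s * b^(d-s) := by
      rw [hD, Dmap_det, hs, hdimpF]
    -- extract the scalar inequality
    have hvpos : 0 < volume (closedBall (0:EuclideanSpace ℝ (Fin d)) 1) :=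
      measure_closedBall_pos volume 0 one_pos
    have hvlt : volume (closedBall (0:EuclideanSpace ℝ (Fin d)) 1) < ⊤ :=
      measure_closedBall_lt_top
    rw [himg, hvol1, hvol2] at hvol
    have hscal : |LinearMap.det Bt.toLinearMap| ≤ |LinearMap.det A.toLinearMap| := by
      have h1 := (ENNReal.mul_le_mul_iff_left hvpos.ne' hvlt.ne).mp hvol
      exact (ENNReal.ofReal_le_ofReal_iff (abs_nonneg _)).mp h1
    have hAdet0 : LinearMap.det A.toLinearMap ≠ 0 := by
      have := LinearEquiv.isUnit_det' A
      exact this.ne_zero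
    have hX : τ^s * b^(d-s) ≤ 1 := by
      rw [hdet, abs_mul, hDdet] at hscal
      have h3 : 0 < |LinearMap.det A.toLinearMap| := abs_pos.mpr hAdet0
      have h4 : |LinearMap.det A.toLinearMap| * |τ^s * b^(d-s)|
          ≤ |LinearMap.det A.toLinearMap| * 1 := by simpa using hscal
      have h2 : |τ^s * b^(d-s)| ≤ 1 := (mul_le_mul_iff_right₀ h3).mp h4
      calc τ^s * b^(d-s) = |τ^s * b^(d-s)| := by
            rw [abs_of_pos (by positivity)]
      _ ≤ 1 := h2
    calc (1-t)^s * (1 + c0*t)^(d-s) = (τ^2)^s * (b^2)^(d-s) := by rw [hτsq, hbsq]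
    _ = (τ^s * b^(d-s))^2 := by ring
    _ ≤ 1 := by nlinarith [mul_pos (pow_pos hτ0 s) (pow_pos hb0 (d-s))]
  have hfinal := bernoulli_contra hsd (c := R^2-1) (by nlinarith) ht_bound
  linarith [hcbig]
end
end

section
/- Let d ≥ 1, let K be a convex body in ℝ^d that is centrally symmetric (K = −K), let F be a linear subspace of ℝ^d of dimension s with 0 ≤ s ≤ d−1, and let A : ℝ^d → ℝ^d be a self-adjoint positive definite F-operator. Set E = A(B^d) and assume E ⊆ K and that E has maximal volume among ellipsoids of revolution with axis F contained in K (for every F-operator B and every z ∈ ℝ^d with B(B^d) + z ⊆ K one has vol(B(B^d) + z) ≤ vol(E)). Then E ∩ F ⊆ K ∩ F ⊆ √d • (E ∩ F), where √d • S = {√d·w : w ∈ S}. -/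
open MeasureTheory RealInnerProductSpace Metric Set Pointwise

set_option maxHeartbeats 8000000

noncomputable section

lemma aux_det_ineq {d : ℕ} (hd : 2 ≤ d) {u : ℝ} (hu : (d:ℝ) < u) :
    1 < u / d * (u * ((d:ℝ) - 1) / (d * (u - 1))) ^ (d - 1) := by
  have hd2 : (2:ℝ) ≤ d := by exact_mod_cast hd
  have hu2 : (2:ℝ) < u := lt_of_le_of_lt hd2 hu
  have hd1 : (1:ℝ) ≤ (d:ℝ) - 1 := by linarith
  have hn : ((d - 1 : ℕ) : ℝ) = (d:ℝ) - 1 := by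
    have h1 : (1:ℕ) ≤ d := by omega
    push_cast [h1]
    ring
  set n := d - 1 with hndef
  set x := (u - (d:ℝ)) / (u * ((d:ℝ) - 1)) with hxdef
  have hx0 : 0 < x := by apply div_pos <;> nlinarith
  have hx1 : x < 1 := by rw [div_lt_one (by nlinarith)]; nlinarith
  have hbern : (d:ℝ)/u ≤ (1 - x)^n := by
    have h := one_add_mul_le_pow (a := -x) (by linarith) n
    have h2 : 1 + (n:ℝ) * (-x) = (d:ℝ)/u := by
      rw [hn, hxdef]
      field_simp
      ring
    rw [h2] at h
    rwa [show (1:ℝ) + -x = 1 - x from by ring] at h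
  have hprod : (1+x)^n * (1-x)^n < 1 := by
    rw [← mul_pow]
    have h1 : (1+x)*(1-x) = 1 - x^2 := by ring
    rw [h1]
    apply pow_lt_one₀ (by nlinarith) (by nlinarith) (by omega)
  have hgoal1 : (1+x)^n < u/d := by
    have hdu : (0:ℝ) < (d:ℝ)/u := by positivity
    have h2 : (1+x)^n * ((d:ℝ)/u) ≤ (1+x)^n * (1-x)^n :=
      mul_le_mul_of_nonneg_left hbern (by positivity)
    have h3 : (1+x)^n * ((d:ℝ)/u) < 1 := lt_of_le_of_lt h2 hprod
    rw [← lt_div_iff₀ hdu] at h3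
    rwa [one_div_div] at h3
  have hne1 : u ≠ 0 := by nlinarith
  have hne2 : (d:ℝ) ≠ 0 := by nlinarith
  have hne3 : u - 1 ≠ 0 := by nlinarith
  have hne4 : (d:ℝ) - 1 ≠ 0 := by nlinarith
  have hrecip : (u * ((d:ℝ)-1) / ((d:ℝ) * (u-1))) * (1+x) = 1 := by
    rw [hxdef]; field_simp; ring
  have hβ : (u * ((d:ℝ)-1) / ((d:ℝ)*(u-1)))^n * (1+x)^n = 1 := by
    rw [← mul_pow, hrecip, one_pow]
  calc (1:ℝ) = (u * ((d:ℝ)-1)/((d:ℝ)*(u-1)))^n * (1+x)^n := hβ.symm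
    _ < (u * ((d:ℝ)-1)/((d:ℝ)*(u-1)))^n * (u/d) := by
        have hβpos : 0 < u*((d:ℝ)-1)/((d:ℝ)*(u-1)) := by
          apply div_pos <;> nlinarith
        exact mul_lt_mul_of_pos_left hgoal1 (pow_pos hβpos n)
    _ = u/d * (u * ((d:ℝ)-1)/((d:ℝ)*(u-1)))^n := mul_comm _ _

lemma aux_sq_le {X c : ℝ} (hX : 0 ≤ X) (hc : 0 ≤ c) (h : X^2 ≤ c^2) : X ≤ c := by
  nlinarith

lemma aux_one_lt {X Y : ℝ} (hX : 0 ≤ X) (h2 : X^2 = Y) (h1 : 1 < Y) : 1 < X := by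
  nlinarith [sq_nonneg (X - 1)]

lemma aux_small_case {t u a b r P : ℝ} (ht0 : 0 < t) (hu_def : u = t^2) (hu1 : 1 < u)
    (ha1 : 1 < a) (hb0 : 0 < b) (hb2' : b^2*(u-1) = u - a^2)
    (hpyth : r^2 + P ≤ 1) (hP0 : 0 ≤ P) (hcase : a*t*|r| ≤ 1) :
    (a*r)^2 + b^2*P ≤ 1 := by
  have h1 : 0 ≤ t * |r| := mul_nonneg ht0.le (abs_nonneg r)
  have h2 : t * |r| ≤ a * (t * |r|) := le_mul_of_one_le_left h1 ha1.le
  have h3 : t*|r| ≤ 1 := le_trans h2 (by rw [← mul_assoc]; exact hcase)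
  have h4 : u * r^2 = (t*|r|)^2 := by rw [hu_def, ← sq_abs r]; ring
  have hum : u * r^2 ≤ 1 := by nlinarith
  have hstep : 0 ≤ (a^2 - 1) * (1 - u*r^2) := mul_nonneg (by nlinarith) (by linarith)
  have hY : 0 ≤ (b^2*(u-1)) * (1 - r^2 - P) :=
    mul_nonneg (mul_nonneg (sq_nonneg b) (by linarith)) (by linarith)
  have hsub : (b^2*(u-1))*(1 - r^2 - P) = (u - a^2)*(1 - r^2 - P) := by rw [hb2']
  nlinarith [hstep, hY, hsub, hb2', (by linarith : (0:ℝ) < u - 1)]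

lemma aux_cone_case {t u a b m P : ℝ} (ht1 : 1 < t) (hu_def : u = t^2)
    (ha0 : 0 < a) (hat : a < t) (hb0 : 0 < b)
    (hb2' : b^2*(u-1) = u - a^2) (hua : a^2 ≤ u)
    (hm0 : 0 ≤ m) (hm1 : m ≤ 1) (hP0 : 0 ≤ P) (hP : P ≤ 1 - m^2) :
    (a*m - ((a*t*m - 1)/(u-1))*t)^2 + b^2*P ≤ (1 - (a*t*m - 1)/(u-1))^2 := by
  subst hu_def
  have hu1 : 1 < t^2 := by nlinarith
  set lam := (a*t*m-1)/(t^2-1) with hlam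
  have hune : t^2 - 1 ≠ 0 := by linarith [hu1]
  have heq1 : (a*m - lam*t) * (t^2-1) = t - a*m := by
    rw [hlam]
    field_simp
    ring
  have heq2 : (1 - lam)*(t^2-1) = t^2 - a*t*m := by
    rw [hlam]
    field_simp
    ring
  have hineq : (t^2 - a^2)*(1 - m^2) ≤ (t - a*m)^2 := by nlinarith [sq_nonneg (a - t*m)]
  have hden : (0:ℝ) < (t^2-1)^2 := pow_pos (by linarith) 2
  rw [← mul_le_mul_iff_of_pos_right hden]
  have e1 : ((a*m - lam*t)^2 + b^2*P)*(t^2-1)^2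
      = ((a*m-lam*t)*(t^2-1))^2 + (b^2*(t^2-1))*(P*(t^2-1)) := by ring
  have e2 : (1-lam)^2*(t^2-1)^2 = ((1-lam)*(t^2-1))^2 := by ring
  rw [e1, e2, heq1, heq2, hb2']
  have h5 : (t^2 - a^2)*P ≤ (t^2-a^2)*(1-m^2) := mul_le_mul_of_nonneg_left hP (by linarith)
  have h6 : (t^2 - a^2)*P*(t^2-1) ≤ (t - a*m)^2*(t^2-1) :=
    mul_le_mul_of_nonneg_right (h5.trans hineq) (by linarith)
  have h7 : (t^2 - a*t*m)^2 = (t - a*m)^2 * t^2 := by ring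
  nlinarith [h6, h7]


/-- **Sandwiching in `F`, centrally symmetric case.**
If `K = -K` is a centrally symmetric convex body and `E = A(B^d)` is a maximal-volume
ellipsoid of revolution with axis `F` (`dim F = s ≤ d-1`) contained in `K`, with `A` a
self-adjoint positive definite `F`-operator, then `E ∩ F ⊆ K ∩ F ⊆ √d • (E ∩ F)`. -/
theorem stmt7 {d : ℕ} (hd : 1 ≤ d)
    (K : Set (EuclideanSpace ℝ (Fin d)))
    (hKcpt : IsCompact K) (hKconv : Convex ℝ K) (hKint : (interior K).Nonempty)
    (hKsym : K = -K)
    (F : Submodule ℝ (EuclideanSpace ℝ (Fin d))) (s : ℕ)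
    (hs : Module.finrank ℝ F = s) (hsd : s < d)
    (A : EuclideanSpace ℝ (Fin d) ≃ₗ[ℝ] EuclideanSpace ℝ (Fin d))
    (hA : IsFOperator F A)
    (hAsa : ∀ x y : EuclideanSpace ℝ (Fin d), ⟪A x, y⟫ = ⟪x, A y⟫)
    (hApd : ∀ x : EuclideanSpace ℝ (Fin d), x ≠ 0 → 0 < ⟪A x, x⟫)
    (E : Set (EuclideanSpace ℝ (Fin d)))
    (hE : E = A '' closedBall (0 : EuclideanSpace ℝ (Fin d)) 1)
    (hEK : E ⊆ K)
    (hmax : ∀ (B : EuclideanSpace ℝ (Fin d) ≃ₗ[ℝ] EuclideanSpace ℝ (Fin d)),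
      IsFOperator F B → ∀ z : EuclideanSpace ℝ (Fin d),
        (fun y => B y + z) '' closedBall (0 : EuclideanSpace ℝ (Fin d)) 1 ⊆ K →
        volume ((fun y => B y + z) '' closedBall (0 : EuclideanSpace ℝ (Fin d)) 1) ≤ volume E) :
    E ∩ (F : Set (EuclideanSpace ℝ (Fin d))) ⊆ K ∩ (F : Set (EuclideanSpace ℝ (Fin d))) ∧
    K ∩ (F : Set (EuclideanSpace ℝ (Fin d))) ⊆
      Real.sqrt d • (E ∩ (F : Set (EuclideanSpace ℝ (Fin d)))) := by
  have hdR : (1:ℝ) ≤ (d:ℝ) := by exact_mod_cast hd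
  have hsd0 : (0:ℝ) < Real.sqrt d := Real.sqrt_pos.mpr (by linarith)
  have hsd1 : (1:ℝ) ≤ Real.sqrt d := by
    rw [show (1:ℝ) = Real.sqrt 1 from (Real.sqrt_one).symm]
    exact Real.sqrt_le_sqrt hdR
  have hFmap : F.map (A : EuclideanSpace ℝ (Fin d) →ₗ[ℝ] EuclideanSpace ℝ (Fin d)) = F := by
    apply Submodule.eq_of_le_of_finrank_le
    · rintro y ⟨z, hz, rfl⟩
      exact hA.1 z hz
    · rw [LinearEquiv.finrank_map_eq]
  have hsymm_mem : ∀ y ∈ F, A.symm y ∈ F := by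
    intro y hy
    rw [← hFmap] at hy
    obtain ⟨z, hz, hzy⟩ := hy
    have hz2 : A.symm y = z := by
      rw [← hzy]; exact A.symm_apply_apply z
    rwa [hz2]
  have hKneg : ∀ y ∈ K, -y ∈ K := by
    intro y hy
    rw [hKsym]
    exact Set.neg_mem_neg.mpr hy
  constructor
  · exact Set.inter_subset_inter_left _ hEK
  intro x hx
  obtain ⟨hxK, hxF⟩ := hx
  have hwF : A.symm x ∈ F := hsymm_mem x hxF
  have hAw : A (A.symm x) = x := A.apply_symm_apply x
  have hkey : ‖A.symm x‖ ≤ Real.sqrt d := by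
    by_contra hcon
    push_neg at hcon
    set w := A.symm x with hwdef
    set t := ‖w‖ with htdef
    have ht0 : 0 < t := lt_of_le_of_lt hsd0.le hcon
    have ht1 : 1 < t := lt_of_le_of_lt hsd1 hcon
    have hw0 : w ≠ 0 := by
      intro h
      rw [htdef, h] at ht0
      simp at ht0
    have hd2 : 2 ≤ d := by
      have hFnt : Nontrivial F := ⟨⟨⟨w, hwF⟩, 0, by simp [Subtype.ext_iff, hw0]⟩⟩
      have : 0 < Module.finrank ℝ F := Module.finrank_pos
      omega
    have hdR2 : (2:ℝ) ≤ (d:ℝ) := by exact_mod_cast hd2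
    have hu : (d:ℝ) < t^2 := by
      have h1 : Real.sqrt d * Real.sqrt d < t * t :=
        mul_self_lt_mul_self (Real.sqrt_nonneg d) hcon
      rw [Real.mul_self_sqrt (by linarith)] at h1
      rw [pow_two]
      linarith
    set u := t^2 with hu_def
    have hu1 : (1:ℝ) < u := by linarith
    have hd0 : (0:ℝ) < (d:ℝ) := by linarith
    have hu0 : (0:ℝ) < u := by rw [hu_def]; exact pow_pos ht0 2
    have htne : t^2 - 1 ≠ 0 := by rw [← hu_def]; exact sub_ne_zero.mpr (ne_of_gt hu1)
    set a := Real.sqrt (u / d) with ha_def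
    set b := Real.sqrt ((u*((d:ℝ)-1))/((d:ℝ)*(u-1))) with hb_def
    have ha2 : a^2 = u/d := Real.sq_sqrt (div_pos hu0 hd0).le
    have hb2 : b^2 = (u*((d:ℝ)-1))/((d:ℝ)*(u-1)) := Real.sq_sqrt
      (div_nonneg (mul_nonneg hu0.le (by linarith : (0:ℝ) ≤ (d:ℝ) - 1))
        (mul_nonneg hd0.le (by linarith : (0:ℝ) ≤ u - 1)))
    have ha0 : 0 < a := Real.sqrt_pos.mpr (div_pos hu0 hd0)
    have hb0 : 0 < b := Real.sqrt_pos.mpr (div_pos (mul_pos hu0 (by linarith)) (mul_pos hd0 (by linarith)))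
    have hud : 1 < u / (d:ℝ) := (one_lt_div (by linarith)).mpr hu
    have ha1 : 1 < a := aux_one_lt ha0.le ha2 hud
    have ha2d : a^2 * d = u := by rw [ha2]; field_simp
    have hua : a^2 ≤ u := by
      have h9 : 0 ≤ a^2 * ((d:ℝ) - 1) := mul_nonneg (sq_nonneg a) (by linarith)
      nlinarith [ha2d]
    have hat : a < t := by
      by_contra h
      push_neg at h
      have h2 : t^2 ≤ a^2 := pow_le_pow_left₀ ht0.le h 2
      have h9 : 0 ≤ a^2 * ((d:ℝ) - 2) := mul_nonneg (sq_nonneg a) (by linarith)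
      nlinarith [ha2d, mul_pos ha0 ha0, hu_def]
    have hb2' : b^2 * (u - 1) = u - a^2 := by
      rw [ha2, hb2]; field_simp [sub_ne_zero.mpr (ne_of_gt hu1)]
    have hb1 : b < 1 := by
      have hlt : b^2 < 1 := by
        rw [hb2, div_lt_one (mul_pos hd0 (by linarith))]
        nlinarith [hu, hd0]
      by_contra hcon2
      push_neg at hcon2
      have h9 : 1*1 ≤ b*b := mul_le_mul hcon2 hcon2 zero_le_one hb0.le
      nlinarith
    -- unit vector e
    set e : EuclideanSpace ℝ (Fin d) := t⁻¹ • w with he_def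
    have heF : e ∈ F := F.smul_mem _ hwF
    have hee : ‖e‖ = 1 := by
      rw [he_def, norm_smul, Real.norm_eq_abs, abs_of_pos (inv_pos.mpr ht0), ← htdef]
      field_simp
    have hip_ee : ⟪e, e⟫ = 1 := by
      rw [real_inner_self_eq_norm_sq, hee]; norm_num
    have hwe : w = t • e := by
      rw [he_def, smul_smul, mul_inv_cancel₀ (ne_of_gt ht0), one_smul]
    have pyth : ∀ (c : ℝ) (q : EuclideanSpace ℝ (Fin d)), ⟪e, q⟫ = 0 →
        ‖c • e + q‖^2 = c^2 + ‖q‖^2 := by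
      intro c q h
      rw [norm_add_sq_real, real_inner_smul_left, h, norm_smul]
      simp [hee, mul_pow, sq_abs]
    clear_value w t u a b e
    -- the stretching map D
    set Dlin : EuclideanSpace ℝ (Fin d) →ₗ[ℝ] EuclideanSpace ℝ (Fin d) :=
      { toFun := fun y => b • y + ((a - b) * ⟪e, y⟫) • e
        map_add' := by
          intro p q
          simp only [inner_add_right, smul_add, mul_add, add_smul]
          abel
        map_smul' := by
          intro c p
          simp only [inner_smul_right, RingHom.id_apply, smul_add, smul_smul]
          ring_nf } with hDlin_def
    set Elin : EuclideanSpace ℝ (Fin d) →ₗ[ℝ] EuclideanSpace ℝ (Fin d) :=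
      { toFun := fun y => b⁻¹ • y + ((a⁻¹ - b⁻¹) * ⟪e, y⟫) • e
        map_add' := by
          intro p q
          simp only [inner_add_right, smul_add, mul_add, add_smul]
          abel
        map_smul' := by
          intro c p
          simp only [inner_smul_right, RingHom.id_apply, smul_add, smul_smul]
          ring_nf } with hElin_def
    have hane : a ≠ 0 := ne_of_gt ha0
    have hbne : b ≠ 0 := ne_of_gt hb0
    have hcomp1 : Dlin.comp Elin = LinearMap.id := by
      refine LinearMap.ext fun y => ?_
      show b • (b⁻¹ • y + ((a⁻¹ - b⁻¹) * ⟪e, y⟫) • e) +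
        ((a - b) * ⟪e, b⁻¹ • y + ((a⁻¹ - b⁻¹) * ⟪e, y⟫) • e⟫) • e = y
      rw [inner_add_right, inner_smul_right, inner_smul_right, hip_ee]
      match_scalars <;> field_simp <;> ring
    have hcomp2 : Elin.comp Dlin = LinearMap.id := by
      refine LinearMap.ext fun y => ?_
      show b⁻¹ • (b • y + ((a - b) * ⟪e, y⟫) • e) +
        ((a⁻¹ - b⁻¹) * ⟪e, b • y + ((a - b) * ⟪e, y⟫) • e⟫) • e = y
      rw [inner_add_right, inner_smul_right, inner_smul_right, hip_ee]
      match_scalars <;> field_simp <;> ring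
    set D : EuclideanSpace ℝ (Fin d) ≃ₗ[ℝ] EuclideanSpace ℝ (Fin d) :=
      LinearEquiv.ofLinear Dlin Elin hcomp1 hcomp2 with hD_def
    have hD : ∀ y, D y = b • y + ((a - b) * ⟪e, y⟫) • e := fun y => rfl
    have hDe : D e = a • e := by
      rw [hD, hip_ee]
      match_scalars <;> ring
    have hDperp : ∀ y, ⟪e, y⟫ = 0 → D y = b • y := by
      intro y h
      rw [hD, h]
      simp
    clear_value Dlin Elin D
    obtain ⟨hA1, hA2, μ, hμ0, hμ⟩ := hA
    have hBop : IsFOperator F (D.trans A) := by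
      refine ⟨?_, ?_, ⟨b * μ, mul_ne_zero hbne hμ0, ?_⟩⟩
      · intro y hy
        have hmem : D y ∈ F := by
          rw [hD]
          exact F.add_mem (F.smul_mem _ hy) (F.smul_mem _ heF)
        exact hA1 _ hmem
      · intro y hy
        have h0 : ⟪e, y⟫ = 0 := (Submodule.mem_orthogonal F y).mp hy e heF
        have heq : (D.trans A) y = b • A y := by
          rw [LinearEquiv.trans_apply, hDperp y h0, _root_.map_smul]
        rw [heq]
        exact Submodule.smul_mem _ _ (hA2 y hy)
      · intro y hy
        have h0 : ⟪e, y⟫ = 0 := (Submodule.mem_orthogonal F y).mp hy e heF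
        rw [LinearEquiv.trans_apply, hDperp y h0, _root_.map_smul, hμ y hy, smul_smul]
    -- containment
    have hsub : (fun y => (D.trans A) y + 0) '' closedBall (0 : EuclideanSpace ℝ (Fin d)) 1 ⊆ K := by
      rintro - ⟨y, hy, rfl⟩
      rw [mem_closedBall_zero_iff] at hy
      simp only [add_zero, LinearEquiv.trans_apply]
      set r : ℝ := ⟪e, y⟫ with hr_def
      set v : EuclideanSpace ℝ (Fin d) := y - r • e with hv_def
      have hev : ⟪e, v⟫ = 0 := by
        rw [hv_def, inner_sub_right, inner_smul_right, hip_ee]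
        ring
      have hyv : y = r • e + v := by rw [hv_def]; abel
      have hpyth : r^2 + ‖v‖^2 ≤ 1 := by
        have h1 : ‖y‖^2 = r^2 + ‖v‖^2 := by rw [hyv, pyth r v hev]
        have h2 : ‖y‖^2 ≤ 1^2 := pow_le_pow_left₀ (norm_nonneg y) hy 2
        rw [one_pow] at h2
        linarith
      have hr2 : r^2 ≤ 1 := by linarith [sq_nonneg ‖v‖]
      have habs : |r| ≤ 1 := aux_sq_le (abs_nonneg r) zero_le_one
        (by rw [sq_abs, one_pow]; exact hr2)
      have hDy : D y = (a*r) • e + b • v := by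
        rw [hD, hyv]
        rw [inner_add_right, inner_smul_right, hip_ee, hev]
        match_scalars <;> ring
      have hbv : ⟪e, b • v⟫ = 0 := by rw [inner_smul_right, hev]; ring
      have hnbv : ‖b • v‖^2 = b^2 * ‖v‖^2 := by
        rw [norm_smul]; simp [mul_pow, sq_abs]
      by_cases hcase : a * t * |r| ≤ 1
      · -- small case
        apply hEK
        rw [hE]
        refine ⟨D y, ?_, rfl⟩
        rw [mem_closedBall_zero_iff]
        have hn2 : ‖D y‖^2 = (a*r)^2 + b^2*‖v‖^2 := by
          rw [hDy, pyth (a*r) (b • v) hbv, hnbv]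
        have hle : ‖D y‖^2 ≤ 1 := by
          rw [hn2]
          exact aux_small_case ht0 hu_def hu1 ha1 hb0 hb2' hpyth (sq_nonneg ‖v‖) hcase
        exact aux_sq_le (norm_nonneg _) zero_le_one (by rw [one_pow]; exact hle)
      · -- cone case
        push_neg at hcase
        set m := |r| with hm_def
        have hm0 : 0 ≤ m := abs_nonneg r
        have hm1 : m ≤ 1 := habs
        have hm2 : m^2 = r^2 := sq_abs r
        set lam := (a*t*m - 1)/(u - 1) with hlam_def
        have hlam0 : 0 < lam := div_pos (by linarith) (by linarith)
        have hlam1 : lam < 1 := by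
          rw [hlam_def, div_lt_one (by linarith)]
          have h1 : a*t*m ≤ a*t*1 := mul_le_mul_of_nonneg_left hm1 (mul_nonneg ha0.le ht0.le)
          rw [mul_one] at h1
          have h2 : a*t < t*t := mul_lt_mul_of_pos_right hat ht0
          have h3 : u = t*t := by rw [hu_def]; ring
          linarith
        have h1lam : (0:ℝ) < 1 - lam := by linarith
        set σ : ℝ := if 0 ≤ r then 1 else -1 with hσ_def
        have hσ2 : σ^2 = 1 := by
          rw [hσ_def]; split <;> norm_num
        have hσm : σ * m = r := by
          rw [hσ_def, hm_def]
          split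
          · simp [abs_of_nonneg ‹_›]
          · simp [abs_of_neg (lt_of_not_ge ‹_›)]
        have hσxK : σ • x ∈ K := by
          rw [hσ_def]
          split
          · simpa using hxK
          · simpa using hKneg x hxK
        set z : EuclideanSpace ℝ (Fin d) := D y - lam • (σ • w) with hz_def
        have hzc : z = (a*r - lam*σ*t) • e + b • v := by
          rw [hz_def, hDy, hwe]
          match_scalars <;> ring
        have hsσ : a*r - lam*σ*t = σ * (a*m - lam*t) := by
          rw [← hσm]; ring
        have hz2 : ‖z‖^2 = (a*m - lam*t)^2 + b^2*‖v‖^2 := by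
          rw [hzc, pyth _ (b • v) hbv, hnbv, hsσ, mul_pow, hσ2, one_mul]
        have hv2 : ‖v‖^2 ≤ 1 - m^2 := by linarith [hpyth, hm2]
        have hkey2 : (a*m - lam*t)^2 + b^2*‖v‖^2 ≤ (1-lam)^2 := by
          rw [hlam_def]
          exact aux_cone_case ht1 hu_def ha0 hat hb0 hb2' hua hm0 hm1 (sq_nonneg ‖v‖) hv2
        have hz1 : ‖z‖ ≤ 1 - lam :=
          aux_sq_le (norm_nonneg z) h1lam.le (by rw [hz2]; exact hkey2)
        set q : EuclideanSpace ℝ (Fin d) := (1 - lam)⁻¹ • z with hq_def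
        have hq1 : ‖q‖ ≤ 1 := by
          rw [hq_def, norm_smul, Real.norm_eq_abs, abs_of_pos (inv_pos.mpr h1lam)]
          have h2 : (1-lam)⁻¹ * ‖z‖ ≤ (1-lam)⁻¹ * (1-lam) :=
            mul_le_mul_of_nonneg_left hz1 (inv_pos.mpr h1lam).le
          rwa [inv_mul_cancel₀ (ne_of_gt h1lam)] at h2
        have hAqK : A q ∈ K := by
          apply hEK
          rw [hE]
          exact ⟨q, mem_closedBall_zero_iff.mpr hq1, rfl⟩
        have hqe : D y = lam • (σ • w) + (1 - lam) • q := by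
          rw [hq_def, smul_inv_smul₀ (ne_of_gt h1lam), hz_def]
          abel
        have hADy : A (D y) = lam • (σ • x) + (1 - lam) • (A q) := by
          rw [hqe]
          simp only [_root_.map_add, _root_.map_smul]
          rw [hAw]
        rw [hADy]
        exact hKconv hσxK hAqK hlam0.le h1lam.le (by ring)
    -- volume contradiction
    have hvol := hmax (D.trans A) hBop 0 hsub
    have hfun : (fun y => (D.trans A) y + 0) = ⇑((D.trans A).toLinearMap) := by
      funext y; simp
    haveI : NeZero d := ⟨by omega⟩
    have hcard : Module.finrank ℝ (EuclideanSpace ℝ (Fin d)) = Fintype.card (Fin d) := by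
      simp
    have horth : Orthonormal ℝ (({0} : Set (Fin d)).restrict
        (fun _ => e : Fin d → EuclideanSpace ℝ (Fin d))) := by
      rw [orthonormal_iff_ite]
      rintro ⟨i, hi⟩ ⟨j, hj⟩
      simp only [Set.mem_singleton_iff] at hi hj
      subst hi; subst hj
      simp [Set.restrict, hip_ee, hee]
    obtain ⟨b₀, hb₀⟩ := horth.exists_orthonormalBasis_extension_of_card_eq hcard
    have hb₀0 : b₀ 0 = e := hb₀ 0 rfl
    have hdet : LinearMap.det (D : EuclideanSpace ℝ (Fin d) →ₗ[ℝ] EuclideanSpace ℝ (Fin d))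
        = a * b^(d-1) := by
      have hM : LinearMap.toMatrix b₀.toBasis b₀.toBasis
          (D : EuclideanSpace ℝ (Fin d) →ₗ[ℝ] EuclideanSpace ℝ (Fin d))
          = Matrix.diagonal (fun i => if i = 0 then a else b) := by
        ext i j
        rw [LinearMap.toMatrix_apply]
        have hbj : D (b₀.toBasis j) = (if j = 0 then a else b) • b₀.toBasis j := by
          rw [OrthonormalBasis.coe_toBasis]
          by_cases hj : j = 0
          · subst hj
            rw [hb₀0, hDe, if_pos rfl]
          · have h0 : ⟪e, b₀ j⟫ = 0 := by
              rw [← hb₀0]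
              exact b₀.orthonormal.2 (Ne.symm hj)
            rw [hDperp _ h0, if_neg hj]
        simp only [LinearEquiv.coe_coe]
        rw [hbj, _root_.map_smul, Module.Basis.repr_self]
        rcases eq_or_ne i j with h | h
        · subst h
          simp only [Matrix.diagonal_apply_eq]
          split <;> simp
        · rw [Matrix.diagonal_apply_ne _ h]
          split <;> simp [Finsupp.single_apply, Ne.symm h]
      rw [← LinearMap.det_toMatrix b₀.toBasis, hM, Matrix.det_diagonal]
      rw [← Finset.mul_prod_erase Finset.univ _ (Finset.mem_univ (0 : Fin d))]
      rw [if_pos rfl]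
      congr 1
      rw [Finset.prod_congr rfl (fun i hi => if_neg (Finset.ne_of_mem_erase hi)),
        Finset.prod_const, Finset.card_erase_of_mem (Finset.mem_univ _), Finset.card_univ,
        Fintype.card_fin]
    have hdetA : LinearMap.det (A : EuclideanSpace ℝ (Fin d) →ₗ[ℝ] EuclideanSpace ℝ (Fin d)) ≠ 0 :=
      A.isUnit_det'.ne_zero
    have hab1 : 1 < a * b^(d-1) := by
      have h := aux_det_ineq hd2 hu
      have h2 : (a * b^(d-1))^2 = u / d * (u*((d:ℝ)-1)/((d:ℝ)*(u-1)))^(d-1) := by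
        rw [mul_pow, ← pow_mul, mul_comm (d-1) 2, pow_mul, ha2, hb2]
      exact aux_one_lt (mul_nonneg ha0.le (pow_nonneg hb0.le (d-1))) h2 h
    have hdetcomp : LinearMap.det ((D.trans A) : EuclideanSpace ℝ (Fin d) →ₗ[ℝ] EuclideanSpace ℝ (Fin d))
        = LinearMap.det (A : EuclideanSpace ℝ (Fin d) →ₗ[ℝ] EuclideanSpace ℝ (Fin d)) * (a * b^(d-1)) := by
      have hco : ((D.trans A) : EuclideanSpace ℝ (Fin d) →ₗ[ℝ] EuclideanSpace ℝ (Fin d))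
          = (A : EuclideanSpace ℝ (Fin d) →ₗ[ℝ] EuclideanSpace ℝ (Fin d)) ∘ₗ
            (D : EuclideanSpace ℝ (Fin d) →ₗ[ℝ] EuclideanSpace ℝ (Fin d)) := rfl
      rw [hco, LinearMap.det_comp, hdet]
    rw [hfun, Measure.addHaar_image_linearMap, hdetcomp] at hvol
    rw [hE, show (⇑A : EuclideanSpace ℝ (Fin d) → EuclideanSpace ℝ (Fin d))
      = ⇑(A : EuclideanSpace ℝ (Fin d) →ₗ[ℝ] EuclideanSpace ℝ (Fin d)) from rfl,
      Measure.addHaar_image_linearMap] at hvol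
    set V := volume (closedBall (0 : EuclideanSpace ℝ (Fin d)) 1) with hV_def
    have hV0 : V ≠ 0 := (measure_closedBall_pos volume 0 one_pos).ne'
    have hVt : V ≠ ⊤ := measure_closedBall_lt_top.ne
    set dA := LinearMap.det (A : EuclideanSpace ℝ (Fin d) →ₗ[ℝ] EuclideanSpace ℝ (Fin d)) with hdA_def
    have habs' : |dA| < |dA * (a * b^(d-1))| := by
      rw [abs_mul]
      have h0 : 0 < |dA| := abs_pos.mpr hdetA
      have h1 : |a * b^(d-1)| = a * b^(d-1) :=
        abs_of_pos (mul_pos ha0 (pow_pos hb0 (d-1)))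
      rw [h1]
      exact lt_mul_of_one_lt_right h0 hab1
    have hlt : ENNReal.ofReal |dA| * V < ENNReal.ofReal |dA * (a * b^(d-1))| * V := by
      apply ENNReal.mul_lt_mul_left hV0 hVt
      exact (ENNReal.ofReal_lt_ofReal_iff (lt_of_le_of_lt (abs_nonneg _) habs')).mpr habs'
    exact absurd hvol (not_le.mpr hlt)
  -- conclusion from hkey
  have hx' : (Real.sqrt d)⁻¹ • x ∈ E ∩ (F : Set (EuclideanSpace ℝ (Fin d))) := by
    constructor
    · rw [hE]
      refine ⟨(Real.sqrt d)⁻¹ • (A.symm x), ?_, ?_⟩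
      · rw [mem_closedBall_zero_iff, norm_smul, Real.norm_eq_abs, abs_of_pos (inv_pos.mpr hsd0)]
        have h2 : (Real.sqrt d)⁻¹ * ‖A.symm x‖ ≤ (Real.sqrt d)⁻¹ * Real.sqrt d :=
          mul_le_mul_of_nonneg_left hkey (inv_pos.mpr hsd0).le
        rwa [inv_mul_cancel₀ (ne_of_gt hsd0)] at h2
      · rw [_root_.map_smul, hAw]
    · exact F.smul_mem _ hxF
  rw [Set.mem_smul_set]
  exact ⟨_, hx', smul_inv_smul₀ (ne_of_gt hsd0) x⟩
end
end
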